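/- α-morphisms preserve reachable markings and transition firings: if φ: N1 → N2 is an α-morphism and m1 is reachable in N1, then φ(m1) is reachable in N2; moreover if m1[t⟩m1' in N1, then either φ(t) ∈ T2 and φ(m1)[φ(t)⟩φ(m1') in N2, or φ(t) ∈ P2 and φ(m1) = φ(m1'). -/

import Mathlib

/-- A (marked) Petri net over a universe `X` of nodes, with markings of safe
nets identified with sets of places. -/
structure PNet (X : Type) where
  P : Set X
  T : Set X
  F : Set (X × X)
  m0 : Set X
  mf : Set X

namespace PNet

variable {X : Type}

def nodes (N : PNet X) : Set X := N.P ∪ N.T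

def pre (N : PNet X) (x : X) : Set X := {y | (y, x) ∈ N.F}

def post (N : PNet X) (x : X) : Set X := {y | (x, y) ∈ N.F}

def preS (N : PNet X) (A : Set X) : Set X := ⋃ x ∈ A, N.pre x

def postS (N : PNet X) (A : Set X) : Set X := ⋃ x ∈ A, N.post x

def nbhd (N : PNet X) (x : X) : Set X := N.pre x ∪ N.post x

def nbhdS (N : PNet X) (A : Set X) : Set X := N.preS A ∪ N.postS A

/-- Basic structural conditions on a Petri net. -/
def IsNet (N : PNet X) : Prop :=
  Disjoint N.P N.T ∧
  N.F ⊆ (N.P ×ˢ N.T) ∪ (N.T ×ˢ N.P) ∧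
  (∀ t ∈ N.T, (N.pre t).Nonempty ∧ (N.post t).Nonempty) ∧
  N.m0 ⊆ N.P ∧ N.mf ⊆ N.P

/-- Reflexive-transitive closure `F*` of the flow relation. -/
def FStar (N : PNet X) (x y : X) : Prop :=
  Relation.ReflTransGen (fun a b => (a, b) ∈ N.F) x y

/-- Transition `t` is enabled at marking `m` (markings of safe nets as sets). -/
def enabled (N : PNet X) (m : Set X) (t : X) : Prop := t ∈ N.T ∧ N.pre t ⊆ m

/-- Firing of `t` at marking `m`. -/
def fire (N : PNet X) (m : Set X) (t : X) : Set X := (m \ N.pre t) ∪ N.post t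

def step (N : PNet X) (m m' : Set X) : Prop := ∃ t, N.enabled m t ∧ m' = N.fire m t

/-- The set of markings reachable from `m`. -/
def reach (N : PNet X) (m : Set X) : Set (Set X) := {m' | Relation.ReflTransGen N.step m m'}

/-- Generalized workflow net (Definition 3). -/
def IsGWF (N : PNet X) : Prop :=
  N.m0 = {p ∈ N.P | N.pre p = ∅} ∧ N.m0.Nonempty ∧
  N.mf = {p ∈ N.P | N.post p = ∅} ∧ N.mf.Nonempty ∧
  ∀ x ∈ N.nodes, ∃ s ∈ N.m0, ∃ f ∈ N.mf, N.FStar s x ∧ N.FStar x f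

/-- Soundness of a GWF-net. -/
def Sound (N : PNet X) : Prop :=
  (∀ m ∈ N.reach N.m0, N.mf ∈ N.reach m) ∧
  (∀ m ∈ N.reach N.m0, N.mf ⊆ m → m = N.mf) ∧
  (∀ t ∈ N.T, ∃ m ∈ N.reach N.m0, N.enabled m t)

/-- Subnet generated by a set `A` of nodes. -/
def subnet (N : PNet X) (A : Set X) : PNet X :=
  ⟨N.P ∩ A, N.T ∩ A, N.F ∩ (A ×ˢ A), N.m0 ∩ A, N.mf ∩ A⟩

/-- Input elements of the subnet generated by `A`. -/
def inputs (N : PNet X) (A : Set X) : Set X :=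
  {y ∈ A | (∃ z ∈ N.nodes \ A, (z, y) ∈ N.F) ∨ N.pre y = ∅}

/-- Output elements of the subnet generated by `A`. -/
def outputs (N : PNet X) (A : Set X) : Set X :=
  {y ∈ A | (∃ z ∈ N.nodes \ A, (y, z) ∈ N.F) ∨ N.post y = ∅}

/-- A connected net in which every transition has exactly one input and one
output place. -/
def IsStateMachine (N : PNet X) : Prop :=
  (∀ x ∈ N.nodes, ∀ y ∈ N.nodes,
     Relation.ReflTransGen (fun a b => (a, b) ∈ N.F ∨ (b, a) ∈ N.F) x y) ∧
  ∀ t ∈ N.T, (∃ p, N.pre t = {p}) ∧ (∃ q, N.post t = {q})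

/-- `A` (a set of places, taken with its neighborhood) generates a sequential
component of `N`: a state machine with a single token initially. -/
def IsSeqComp (N : PNet X) (A : Set X) : Prop :=
  A ⊆ N.P ∧ IsStateMachine (N.subnet (A ∪ N.nbhdS A)) ∧ ∃ p, N.m0 ∩ A = {p}

/-- State machine decomposability. -/
def SMD (N : PNet X) : Prop := ∀ p ∈ N.P, ∃ A, N.IsSeqComp A ∧ p ∈ A

/-- Inverse image of a node of `N2` under `φ`, inside the nodes of `N1`. -/
def inv (N1 : PNet X) (φ : X → X) (x2 : X) : Set X := {x ∈ N1.nodes | φ x = x2}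

def Acyclic (N : PNet X) : Prop := ∀ x, ¬ Relation.TransGen (fun a b => (a, b) ∈ N.F) x x

/-- α-morphism from `N1` to `N2` (Definition 5). -/
def IsAlpha (N1 N2 : PNet X) (φ : X → X) : Prop :=
  (∀ x ∈ N1.nodes, φ x ∈ N2.nodes) ∧
  (∀ x2 ∈ N2.nodes, ∃ x1 ∈ N1.nodes, φ x1 = x2) ∧
  φ '' N1.P = N2.P ∧
  φ '' N1.m0 = N2.m0 ∧
  (∀ t ∈ N1.T, φ t ∈ N2.T →
     φ '' N1.pre t = N2.pre (φ t) ∧ φ '' N1.post t = N2.post (φ t)) ∧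
  (∀ t ∈ N1.T, φ t ∈ N2.P → φ '' N1.nbhd t = {φ t}) ∧
  ∀ p2 ∈ N2.P,
    Acyclic (N1.subnet (N1.inv φ p2)) ∧
    (∀ p ∈ N1.inputs (N1.inv φ p2) ∩ N1.P,
       φ '' N1.pre p ⊆ N2.pre p2 ∧ ((N2.pre p2).Nonempty → (N1.pre p).Nonempty)) ∧
    (∀ p ∈ N1.outputs (N1.inv φ p2) ∩ N1.P, φ '' N1.post p = N2.post p2) ∧
    (∀ p ∈ N1.inv φ p2 ∩ N1.P,
       (p ∉ N1.inputs (N1.inv φ p2) → φ '' N1.pre p = {p2}) ∧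
       (p ∉ N1.outputs (N1.inv φ p2) → φ '' N1.post p = {p2})) ∧
    (∀ p ∈ N1.inv φ p2 ∩ N1.P,
       ∃ A, N1.IsSeqComp A ∧ p ∈ A ∧ {t ∈ N1.T | φ t ∈ N2.nbhd p2} ⊆ N1.nbhdS A)

/-- `N1` is well marked w.r.t. an α-morphism `φ : N1 → N2`. -/
def WellMarked (N1 N2 : PNet X) (φ : X → X) : Prop :=
  ∀ p2 ∈ N2.m0, ∀ p ∈ N1.inputs (N1.inv φ p2) ∩ N1.P, p ∈ N1.m0

/-- `N` is the channel-composition `N1 ⊕_{Pc} N2` (Definition 4). -/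
def IsChanComp (N1 N2 : PNet X) (Pc : Set X) (N : PNet X) : Prop :=
  Disjoint N1.nodes N2.nodes ∧
  Disjoint Pc (N1.nodes ∪ N2.nodes) ∧
  N.P = N1.P ∪ N2.P ∪ Pc ∧
  N.T = N1.T ∪ N2.T ∧
  N1.F ⊆ N.F ∧ N2.F ⊆ N.F ∧
  N.F \ (N1.F ∪ N2.F) ⊆ (Pc ×ˢ (N1.T ∪ N2.T)) ∪ ((N1.T ∪ N2.T) ×ˢ Pc) ∧
  N.m0 = N1.m0 ∪ N2.m0 ∧
  N.mf = N1.mf ∪ N2.mf ∧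
  ∀ p ∈ Pc,
    ((N.pre p ⊆ N1.T ∧ N.post p ⊆ N2.T) ∨ (N.pre p ⊆ N2.T ∧ N.post p ⊆ N1.T)) ∧
    (N.pre p).Nonempty ∧ (N.post p).Nonempty

/-- `N'` is the refined channel-composition `N1' ⊕_{Pc} N2` obtained from
`Nc = N1 ⊕_{Pc} N2` by refining `N1` with `N1'` along `φ1` (Definition 6). -/
def IsRefChanComp (N1' N2 : PNet X) (Pc : Set X) (φ1 : X → X) (Nc N' : PNet X) : Prop :=
  N'.P = N1'.P ∪ N2.P ∪ Pc ∧
  N'.T = N1'.T ∪ N2.T ∧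
  N1'.F ⊆ N'.F ∧
  (N'.F ∩ (((N2.P ∪ Pc) ×ˢ N2.T) ∪ (N2.T ×ˢ (N2.P ∪ Pc)))
     = Nc.F ∩ (((N2.P ∪ Pc) ×ˢ N2.T) ∪ (N2.T ×ˢ (N2.P ∪ Pc)))) ∧
  N'.F ⊆ N1'.F ∪ (((N2.P ∪ Pc) ×ˢ N2.T) ∪ (N2.T ×ˢ (N2.P ∪ Pc)))
         ∪ ((Pc ×ˢ N1'.T) ∪ (N1'.T ×ˢ Pc)) ∧
  (∀ p ∈ Pc, ∀ t' ∈ N1'.T,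
     ((t', p) ∈ N'.F ↔ (φ1 t', p) ∈ Nc.F) ∧ ((p, t') ∈ N'.F ↔ (p, φ1 t') ∈ Nc.F)) ∧
  N'.m0 = N1'.m0 ∪ N2.m0 ∧
  N'.mf = N1'.mf ∪ N2.mf

/-! ### ℕ-valued markings (general, not necessarily safe, semantics) -/

/-- The initial marking of `N` as an ℕ-valued marking. -/
noncomputable def markN (N : PNet X) : X → ℕ := N.m0.indicator 1

def enabledN (N : PNet X) (m : X → ℕ) (t : X) : Prop :=
  t ∈ N.T ∧ ∀ p ∈ N.pre t, 1 ≤ m p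

noncomputable def fireN (N : PNet X) (m : X → ℕ) (t : X) : X → ℕ :=
  fun p => m p - (N.pre t).indicator 1 p + (N.post t).indicator 1 p

def stepN (N : PNet X) (m m' : X → ℕ) : Prop := ∃ t, N.enabledN m t ∧ m' = N.fireN m t

def reachN (N : PNet X) (m : X → ℕ) : Set (X → ℕ) := {m' | Relation.ReflTransGen N.stepN m m'}

/-! ### Occurrence nets and branching processes -/

/-- Conflict relation. -/
def conflict (N : PNet X) (x y : X) : Prop :=
  ∃ tx ∈ N.T, ∃ ty ∈ N.T, tx ≠ ty ∧ (N.pre tx ∩ N.pre ty).Nonempty ∧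
    N.FStar tx x ∧ N.FStar ty y

/-- Occurrence net (Definition 1). -/
def IsOccNet (N : PNet X) : Prop :=
  Disjoint N.P N.T ∧
  N.F ⊆ (N.P ×ˢ N.T) ∪ (N.T ×ˢ N.P) ∧
  (∀ b ∈ N.P, (N.pre b).Subsingleton) ∧
  (∀ x y, N.FStar x y → N.FStar y x → x = y) ∧
  (∀ x ∈ N.nodes, {y | N.FStar y x}.Finite) ∧
  (∀ x ∈ N.nodes, ¬ N.conflict x x)

/-- Minimal nodes of an occurrence net w.r.t. `F*`. -/
def MinO (N : PNet X) : Set X := {x ∈ N.nodes | N.pre x = ∅}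

/-- `(O, π)` is a branching process of `N` (Definition 2). -/
def IsBranchingProcess (N O : PNet X) (π : X → X) : Prop :=
  IsOccNet O ∧
  π '' O.P ⊆ N.P ∧ π '' O.T ⊆ N.T ∧
  Set.BijOn π (MinO O) N.m0 ∧
  (∀ e ∈ O.T, Set.BijOn π (O.pre e) (N.pre (π e)) ∧ Set.BijOn π (O.post e) (N.post (π e))) ∧
  (∀ e1 ∈ O.T, ∀ e2 ∈ O.T, O.pre e1 = O.pre e2 → π e1 = π e2 → e1 = e2)

end PNet

/-! At every reachable marking of `N1` each sequential component carries exactly one token.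
A transition `t` with `φ t ∈ N2.T` shares a sequential component with every place mapped into
`•(φ t)` (local condition of α-morphisms); its token must then lie in `•t`, so a marked place
outside `•t` is never mapped into `•(φ t)`, and `φ` commutes with firing `t`. A transition
mapped to a place `p2` has its whole neighbourhood collapsed onto `p2`, so firing it does not
change the image of the marking. -/

namespace PNet

variable {X : Type} {N : PNet X}

section Net

variable (hn : N.IsNet)
include hn

lemma mem_P_of_mem_pre {t y : X} (ht : t ∈ N.T) (hy : y ∈ N.pre t) : y ∈ N.P := by
  rcases hn.2.1 hy with h | h
  · exact h.1
  · exact absurd ht (Set.disjoint_left.mp hn.1 h.2)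

lemma mem_P_of_mem_post {t y : X} (ht : t ∈ N.T) (hy : y ∈ N.post t) : y ∈ N.P := by
  rcases hn.2.1 hy with h | h
  · exact absurd ht (Set.disjoint_left.mp hn.1 h.1)
  · exact h.2

lemma nbhdS_subset_T {A : Set X} (hA : A ⊆ N.P) : N.nbhdS A ⊆ N.T := by
  rintro x (hx | hx) <;> obtain ⟨a, ha, hxa⟩ := Set.mem_iUnion₂.mp hx
  · rcases hn.2.1 hxa with h | h
    · exact absurd (hA ha) (Set.disjoint_right.mp hn.1 h.2)
    · exact h.1
  · rcases hn.2.1 hxa with h | h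
    · exact h.2
    · exact absurd (hA ha) (Set.disjoint_right.mp hn.1 h.1)

lemma mem_of_mem_union_nbhdS {A : Set X} (hA : A ⊆ N.P) {y : X} (hy : y ∈ A ∪ N.nbhdS A)
    (hyP : y ∈ N.P) : y ∈ A :=
  hy.resolve_right fun h => Set.disjoint_left.mp hn.1 hyP (nbhdS_subset_T hn hA h)

lemma fire_subset_P {m : Set X} (hm : m ⊆ N.P) {t : X} (ht : t ∈ N.T) : N.fire m t ⊆ N.P := by
  rintro y (hy | hy)
  · exact hm hy.1
  · exact mem_P_of_mem_post hn ht hy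

lemma subset_P_of_mem_reach {m : Set X} (hm : m ∈ N.reach N.m0) : m ⊆ N.P := by
  induction hm with
  | refl => exact hn.2.2.2.1
  | tail _ hstep ih =>
    obtain ⟨t, ht, rfl⟩ := hstep
    exact fire_subset_P hn ih ht.1

end Net

lemma fire_inter (m A : Set X) (t : X) :
    N.fire m t ∩ A = (m ∩ A) \ (N.pre t ∩ A) ∪ N.post t ∩ A := by
  ext y
  simp only [fire, Set.mem_inter_iff, Set.mem_union, Set.mem_sdiff]
  tauto

lemma pre_inter_eq_empty_of_notMem_nbhdS {A : Set X} {t : X} (ht : t ∉ N.nbhdS A) :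
    N.pre t ∩ A = ∅ :=
  Set.eq_empty_of_forall_notMem fun _ hy => ht (Or.inr (Set.mem_biUnion hy.2 hy.1))

lemma post_inter_eq_empty_of_notMem_nbhdS {A : Set X} {t : X} (ht : t ∉ N.nbhdS A) :
    N.post t ∩ A = ∅ :=
  Set.eq_empty_of_forall_notMem fun _ hy => ht (Or.inl (Set.mem_biUnion hy.2 hy.1))

section SeqComp

variable (hn : N.IsNet) {A : Set X} (hA : N.IsSeqComp A) {t : X} (ht : t ∈ N.T)
  (htA : t ∈ N.nbhdS A)
include hn hA ht htA

lemma IsSeqComp.exists_pre_inter_eq_singleton : ∃ p, N.pre t ∩ A = {p} := by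
  obtain ⟨⟨p, hp⟩, -⟩ := hA.2.1.2 t ⟨ht, Or.inr htA⟩
  refine ⟨p, hp ▸ Set.ext fun y => ⟨fun hy => ⟨hy.1, Or.inl hy.2, Or.inr htA⟩, fun hy => ?_⟩⟩
  exact ⟨hy.1, mem_of_mem_union_nbhdS hn hA.1 hy.2.1 (mem_P_of_mem_pre hn ht hy.1)⟩

lemma IsSeqComp.exists_post_inter_eq_singleton : ∃ q, N.post t ∩ A = {q} := by
  obtain ⟨-, ⟨q, hq⟩⟩ := hA.2.1.2 t ⟨ht, Or.inr htA⟩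
  refine ⟨q, hq ▸ Set.ext fun y => ⟨fun hy => ⟨hy.1, Or.inr htA, Or.inl hy.2⟩, fun hy => ?_⟩⟩
  exact ⟨hy.1, mem_of_mem_union_nbhdS hn hA.1 hy.2.2 (mem_P_of_mem_post hn ht hy.1)⟩

end SeqComp

def HasOneTokenPerSeqComp (N : PNet X) (m : Set X) : Prop :=
  ∀ A, N.IsSeqComp A → ∃ a, m ∩ A = {a}

lemma HasOneTokenPerSeqComp.eq_of_mem {m : Set X} (hm : N.HasOneTokenPerSeqComp m)
    {A : Set X} (hA : N.IsSeqComp A) {p q : X} (hp : p ∈ m ∩ A) (hq : q ∈ m ∩ A) : p = q := by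
  obtain ⟨a, ha⟩ := hm A hA
  rw [ha] at hp hq
  exact hp.trans hq.symm

lemma HasOneTokenPerSeqComp.fire (hn : N.IsNet) {m : Set X} (hm : N.HasOneTokenPerSeqComp m)
    {t : X} (ht : N.enabled m t) : N.HasOneTokenPerSeqComp (N.fire m t) := by
  intro A hA
  obtain ⟨a, ha⟩ := hm A hA
  rw [fire_inter, ha]
  by_cases htA : t ∈ N.nbhdS A
  · obtain ⟨p, hp⟩ := hA.exists_pre_inter_eq_singleton hn ht.1 htA
    obtain ⟨q, hq⟩ := hA.exists_post_inter_eq_singleton hn ht.1 htA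
    have hpm : p ∈ m ∩ A := by
      have hp' : p ∈ N.pre t ∩ A := hp ▸ rfl
      exact ⟨ht.2 hp'.1, hp'.2⟩
    rw [ha] at hpm
    exact ⟨q, by rw [hp, hq, ← hpm, Set.sdiff_self, Set.empty_union]⟩
  · exact ⟨a, by rw [pre_inter_eq_empty_of_notMem_nbhdS htA,
      post_inter_eq_empty_of_notMem_nbhdS htA, Set.sdiff_empty, Set.union_empty]⟩

lemma hasOneTokenPerSeqComp_of_mem_reach (hn : N.IsNet) {m : Set X} (hm : m ∈ N.reach N.m0) :
    N.HasOneTokenPerSeqComp m := by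
  induction hm with
  | refl => exact fun A hA => hA.2.2
  | tail _ hstep ih =>
    obtain ⟨t, ht, rfl⟩ := hstep
    exact ih.fire hn ht

namespace IsAlpha

variable {N1 N2 : PNet X} {φ : X → X} (hα : IsAlpha N1 N2 φ) {m : Set X} {t : X}
include hα

lemma enabled_image (ht : N1.enabled m t) (htT : φ t ∈ N2.T) : N2.enabled (φ '' m) (φ t) :=
  ⟨htT, (hα.2.2.2.2.1 t ht.1 htT).1 ▸ Set.image_mono ht.2⟩

lemma apply_notMem_pre (hn1 : N1.IsNet) (hmP : m ⊆ N1.P) (hm : N1.HasOneTokenPerSeqComp m)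
    (ht : N1.enabled m t) {p : X} (hp : p ∈ m) (hpt : p ∉ N1.pre t) :
    φ p ∉ N2.pre (φ t) := by
  intro hpt2
  have hp2P : φ p ∈ N2.P := hα.2.2.1 ▸ Set.mem_image_of_mem φ (hmP hp)
  obtain ⟨A, hA, hpA, hcover⟩ :=
    (hα.2.2.2.2.2.2 (φ p) hp2P).2.2.2.2 p ⟨⟨Or.inl (hmP hp), rfl⟩, hmP hp⟩
  have htA : t ∈ N1.nbhdS A := hcover ⟨ht.1, Or.inr hpt2⟩
  obtain ⟨p', hp'⟩ := hA.exists_pre_inter_eq_singleton hn1 ht.1 htA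
  have hp'A : p' ∈ N1.pre t ∩ A := hp' ▸ rfl
  have hpp' : p = p' := hm.eq_of_mem hA ⟨hp, hpA⟩ ⟨ht.2 hp'A.1, hp'A.2⟩
  exact hpt (hpp' ▸ hp'A.1)

lemma image_fire_of_mem_T (hn1 : N1.IsNet) (hmP : m ⊆ N1.P) (hm : N1.HasOneTokenPerSeqComp m)
    (ht : N1.enabled m t) (htT : φ t ∈ N2.T) :
    φ '' N1.fire m t = N2.fire (φ '' m) (φ t) := by
  obtain ⟨hpre, hpost⟩ := hα.2.2.2.2.1 t ht.1 htT
  rw [fire, fire, Set.image_union, hpost]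
  congr 1
  apply Set.Subset.antisymm
  · rintro _ ⟨x, ⟨hxm, hxt⟩, rfl⟩
    exact ⟨Set.mem_image_of_mem φ hxm, hα.apply_notMem_pre hn1 hmP hm ht hxm hxt⟩
  · rintro _ ⟨⟨x, hxm, rfl⟩, hxt⟩
    exact ⟨x, ⟨hxm, fun hx => hxt (hpre ▸ Set.mem_image_of_mem φ hx)⟩, rfl⟩

lemma image_fire_of_mem_P (hn1 : N1.IsNet) (ht : N1.enabled m t) (htP : φ t ∈ N2.P) :
    φ '' m = φ '' N1.fire m t := by
  have hnbhd : φ '' N1.nbhd t = {φ t} := hα.2.2.2.2.2.1 t ht.1 htP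
  obtain ⟨hpre, hpost⟩ := hn1.2.2.1 t ht.1
  have hcollapse {s : Set X} (hs : s ⊆ N1.nbhd t) (hne : s.Nonempty) : φ '' s = {φ t} :=
    (hne.image φ).subset_singleton_iff.mp (hnbhd ▸ Set.image_mono hs)
  conv_lhs => rw [← Set.sdiff_union_of_subset ht.2]
  rw [fire, Set.image_union, Set.image_union, hcollapse Set.subset_union_left hpre,
    hcollapse Set.subset_union_right hpost]

lemma image_mem_reach (hn1 : N1.IsNet) (hm : m ∈ N1.reach N1.m0) : φ '' m ∈ N2.reach N2.m0 := by
  induction hm with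
  | refl => exact hα.2.2.2.1 ▸ Relation.ReflTransGen.refl
  | @tail m _ hm hstep ih =>
    obtain ⟨t, ht, rfl⟩ := hstep
    rcases hα.1 t (Or.inr ht.1) with htP | htT
    · rwa [← hα.image_fire_of_mem_P hn1 ht htP]
    · exact ih.tail ⟨φ t, hα.enabled_image ht htT, (hα.image_fire_of_mem_T hn1
        (subset_P_of_mem_reach hn1 hm) (hasOneTokenPerSeqComp_of_mem_reach hn1 hm) ht htT)⟩

end IsAlpha

end PNet

open PNet in
theorem alpha_preserves_reach_general {X : Type} (N1 N2 : PNet X) (φ : X → X)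
    (hn1 : N1.IsNet)
    (hα : IsAlpha N1 N2 φ) :
    ∀ m1 ∈ N1.reach N1.m0,
      φ '' m1 ∈ N2.reach N2.m0 ∧
      ∀ t, N1.enabled m1 t →
        (φ t ∈ N2.T →
           N2.enabled (φ '' m1) (φ t) ∧ φ '' (N1.fire m1 t) = N2.fire (φ '' m1) (φ t)) ∧
        (φ t ∈ N2.P → φ '' m1 = φ '' (N1.fire m1 t)) := by
  intro m1 hm1
  have hmP := subset_P_of_mem_reach hn1 hm1
  have hm := hasOneTokenPerSeqComp_of_mem_reach hn1 hm1
  exact ⟨hα.image_mem_reach hn1 hm1, fun t ht =>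
    ⟨fun htT => ⟨hα.enabled_image ht htT, hα.image_fire_of_mem_T hn1 hmP hm ht htT⟩,
      fun htP => hα.image_fire_of_mem_P hn1 ht htP⟩⟩

open PNet in
/-- α-morphisms preserve reachable markings and transition
firings: the image of a reachable marking of `N1` is reachable in `N2`, and a
firing `m1 [t⟩ m1'` of `N1` maps either to a firing of `φ t` (if `φ t` is a
transition of `N2`) or to a stuttering step (if `φ t` is a place of `N2`). -/
theorem alpha_preserves_reach {X : Type} (N1 N2 : PNet X) (φ : X → X)
    (hn1 : N1.IsNet) (hn2 : N2.IsNet) (hsmd1 : N1.SMD) (hsmd2 : N2.SMD)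
    (hα : IsAlpha N1 N2 φ) :
    ∀ m1 ∈ N1.reach N1.m0,
      φ '' m1 ∈ N2.reach N2.m0 ∧
      ∀ t, N1.enabled m1 t →
        (φ t ∈ N2.T →
           N2.enabled (φ '' m1) (φ t) ∧ φ '' (N1.fire m1 t) = N2.fire (φ '' m1) (φ t)) ∧
        (φ t ∈ N2.P → φ '' m1 = φ '' (N1.fire m1 t)) :=
  alpha_preserves_reach_general N1 N2 φ hn1 hα
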